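/- arXiv:1601.08098 — 4 statements merged into one kernel-verified Lean document; each statement's English description precedes it below -/
import Mathlib

section
/- The logarithmic mean Λ is jointly concave on ℝ₊ × ℝ₊: for all s₁,t₁,s₂,t₂ ≥ 0 and θ ∈ [0,1], Λ(θs₁+(1-θ)s₂, θt₁+(1-θ)t₂) ≥ θΛ(s₁,t₁) + (1-θ)Λ(s₂,t₂). -/
/-!
For each `α ∈ [0,1]` the integrand `(s,t) ↦ s^α t^(1-α)` is positively homogeneous, and it is
superadditive on the closed quadrant: dividing by `(s₁+s₂)^α (t₁+t₂)^(1-α)` and applying the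
weighted AM-GM inequality to `sᵢ/(s₁+s₂)` and `tᵢ/(t₁+t₂)` bounds the two terms by numbers that
add up to `1`. Homogeneity and superadditivity give concavity, which survives integration in `α`.
-/

open MeasureTheory Set

/-- The logarithmic mean `Λ(s,t) = ∫₀¹ s^α t^{1-α} dα`. -/
noncomputable def logMean (s t : ℝ) : ℝ := ∫ a in (0:ℝ)..1, s ^ a * t ^ (1 - a)

theorem ConcaveOn.intervalIntegral {E : Type*} [AddCommGroup E] [Module ℝ E] {s : Set E}
    {f : E → ℝ → ℝ} {a b : ℝ} (hab : a ≤ b) (hf : ∀ x ∈ s, IntervalIntegrable (f x) volume a b)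
    (hconc : ∀ r ∈ Icc a b, ConcaveOn ℝ s fun x => f x r) :
    ConcaveOn ℝ s fun x => ∫ r in a..b, f x r := by
  refine ⟨(hconc a ⟨le_rfl, hab⟩).1, fun x hx y hy θ μ hθ hμ hθμ => ?_⟩
  have hxy : θ • x + μ • y ∈ s := (hconc a ⟨le_rfl, hab⟩).1 hx hy hθ hμ hθμ
  simp only [smul_eq_mul]
  rw [← intervalIntegral.integral_const_mul, ← intervalIntegral.integral_const_mul,
    ← intervalIntegral.integral_add ((hf x hx).const_mul θ) ((hf y hy).const_mul μ)]
  exact intervalIntegral.integral_mono_on hab (((hf x hx).const_mul θ).add ((hf y hy).const_mul μ))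
    (hf _ hxy) fun r hr => (hconc r hr).2 hx hy hθ hμ hθμ

namespace Real

variable {a s t : ℝ}

theorem rpow_mul_rpow_one_sub_le_add (ha₀ : 0 ≤ a) (ha₁ : a ≤ 1) (hs : 0 ≤ s) (ht : 0 ≤ t) :
    s ^ a * t ^ (1 - a) ≤ s + t := by
  have := geom_mean_le_arith_mean2_weighted ha₀ (sub_nonneg.2 ha₁) hs ht (add_sub_cancel a 1)
  nlinarith

theorem intervalIntegrable_rpow_mul_rpow_one_sub (hs : 0 ≤ s) (ht : 0 ≤ t) :
    IntervalIntegrable (fun a => s ^ a * t ^ (1 - a)) volume 0 1 := by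
  refine (intervalIntegrable_const (c := s + t)).mono_fun' (by fun_prop) ?_
  rw [uIoc_of_le zero_le_one]
  filter_upwards [ae_restrict_mem measurableSet_Ioc] with a ha
  rw [norm_of_nonneg (by positivity)]
  exact rpow_mul_rpow_one_sub_le_add ha.1.le ha.2 hs ht

theorem mul_rpow_mul_mul_rpow_one_sub {c : ℝ} (hc : 0 ≤ c) (hs : 0 ≤ s) (ht : 0 ≤ t) :
    (c * s) ^ a * (c * t) ^ (1 - a) = c * (s ^ a * t ^ (1 - a)) := by
  rw [mul_rpow hc hs, mul_rpow hc ht]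
  calc c ^ a * s ^ a * (c ^ (1 - a) * t ^ (1 - a))
      = c ^ (a + (1 - a)) * (s ^ a * t ^ (1 - a)) := by rw [rpow_add' hc (by norm_num)]; ring
    _ = c * (s ^ a * t ^ (1 - a)) := by rw [add_sub_cancel, rpow_one]

theorem rpow_mul_rpow_one_sub_add_le {s₁ s₂ t₁ t₂ : ℝ} (ha₀ : 0 ≤ a) (ha₁ : a ≤ 1)
    (hs₁ : 0 ≤ s₁) (ht₁ : 0 ≤ t₁) (hs₂ : 0 ≤ s₂) (ht₂ : 0 ≤ t₂) :
    s₁ ^ a * t₁ ^ (1 - a) + s₂ ^ a * t₂ ^ (1 - a) ≤ (s₁ + s₂) ^ a * (t₁ + t₂) ^ (1 - a) := by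
  rcases (add_nonneg hs₁ hs₂).eq_or_lt with hS | hS
  · obtain ⟨rfl, rfl⟩ : s₁ = 0 ∧ s₂ = 0 := ⟨by linarith, by linarith⟩
    rcases ha₀.eq_or_lt with rfl | ha
    · simp
    · simp [zero_rpow ha.ne']
  rcases (add_nonneg ht₁ ht₂).eq_or_lt with hT | hT
  · obtain ⟨rfl, rfl⟩ : t₁ = 0 ∧ t₂ = 0 := ⟨by linarith, by linarith⟩
    rcases ha₁.eq_or_lt with rfl | ha
    · simp
    · simp [zero_rpow (sub_pos.2 ha).ne']
  set S := s₁ + s₂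
  set T := t₁ + t₂
  have amgm : ∀ {s t : ℝ}, 0 ≤ s → 0 ≤ t →
      s ^ a * t ^ (1 - a) / (S ^ a * T ^ (1 - a)) ≤ a * (s / S) + (1 - a) * (t / T) := by
    intro s t hs ht
    rw [mul_div_mul_comm, ← div_rpow hs hS.le, ← div_rpow ht hT.le]
    exact geom_mean_le_arith_mean2_weighted ha₀ (sub_nonneg.2 ha₁) (by positivity) (by positivity)
      (add_sub_cancel a 1)
  rw [← div_le_one (by positivity), add_div]
  calc _ ≤ (a * (s₁ / S) + (1 - a) * (t₁ / T)) + (a * (s₂ / S) + (1 - a) * (t₂ / T)) :=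
        add_le_add (amgm hs₁ ht₁) (amgm hs₂ ht₂)
    _ = 1 := by field_simp; ring

theorem concaveOn_rpow_mul_rpow_one_sub (ha₀ : 0 ≤ a) (ha₁ : a ≤ 1) :
    ConcaveOn ℝ (Ici 0 ×ˢ Ici 0) fun p : ℝ × ℝ => p.1 ^ a * p.2 ^ (1 - a) := by
  refine ⟨(convex_Ici 0).prod (convex_Ici 0), ?_⟩
  rintro ⟨s₁, t₁⟩ ⟨hs₁, ht₁⟩ ⟨s₂, t₂⟩ ⟨hs₂, ht₂⟩ θ μ hθ hμ -
  simp only [mem_Ici] at hs₁ ht₁ hs₂ ht₂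
  simp only [Prod.smul_mk, Prod.mk_add_mk, smul_eq_mul]
  rw [← mul_rpow_mul_mul_rpow_one_sub hθ hs₁ ht₁, ← mul_rpow_mul_mul_rpow_one_sub hμ hs₂ ht₂]
  exact rpow_mul_rpow_one_sub_add_le ha₀ ha₁ (by positivity) (by positivity) (by positivity)
    (by positivity)

end Real

theorem concaveOn_logMean : ConcaveOn ℝ (Ici 0 ×ˢ Ici 0) fun p : ℝ × ℝ => logMean p.1 p.2 :=
  ConcaveOn.intervalIntegral zero_le_one
    (fun _ hp => Real.intervalIntegrable_rpow_mul_rpow_one_sub hp.1 hp.2)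
    fun _ ha => Real.concaveOn_rpow_mul_rpow_one_sub ha.1 ha.2

theorem logMean_concave (s₁ t₁ s₂ t₂ θ : ℝ)
    (hs₁ : 0 ≤ s₁) (ht₁ : 0 ≤ t₁) (hs₂ : 0 ≤ s₂) (ht₂ : 0 ≤ t₂)
    (hθ₀ : 0 ≤ θ) (hθ₁ : θ ≤ 1) :
    θ * logMean s₁ t₁ + (1 - θ) * logMean s₂ t₂
      ≤ logMean (θ * s₁ + (1 - θ) * s₂) (θ * t₁ + (1 - θ) * t₂) := by
  simpa using concaveOn_logMean.2 (x := (s₁, t₁)) (y := (s₂, t₂)) ⟨hs₁, ht₁⟩ ⟨hs₂, ht₂⟩ hθ₀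
    (sub_nonneg.2 hθ₁) (add_sub_cancel θ 1)
end

section
/- The function (v,a,b) ↦ v²/Λ(a,b) is jointly convex and 1-homogeneous on ℝ × ℝ₊ × ℝ₊, where Λ is the logarithmic mean (with the convention that the value is 0 if v = 0 and Λ(a,b) = 0, and +∞ if v ≠ 0 and Λ(a,b) = 0). -/
open MeasureTheory

/-- The function `F(v,a,b) = v² / Λ(a,b)`, with value `0` if `v = 0` and `Λ(a,b) = 0`,
and `+∞` if `v ≠ 0` and `Λ(a,b) = 0`. -/
noncomputable def Ffn (v a b : ℝ) : ENNReal :=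
  if 0 < logMean a b then ENNReal.ofReal (v ^ 2 / logMean a b)
  else if v = 0 then 0
  else ⊤

/-!
Write `F(v, a, b) = φ(v, Λ(a, b))` with `φ(v, s) = v² / s`, extended to `s = 0` by `0` or `∞`.
For `s ≥ 0`, `φ(v, s) = sup_t (2tv - t²s)` is a supremum of linear functions of `(v, s)`, so `φ`
is jointly convex, positively 1-homogeneous and nonincreasing in `s`. The logarithmic mean is
1-homogeneous and, by Hölder's inequality under the integral, superadditive, hence concave.
Since `φ` is nonincreasing in `s` and `Λ` is concave, `φ(v, Λ(a, b))` is jointly convex.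
-/

open scoped ENNReal

noncomputable def quadOverLin (v s : ℝ) : ℝ≥0∞ :=
  if 0 < s then ENNReal.ofReal (v ^ 2 / s) else if v = 0 then 0 else ⊤

lemma Ffn_eq_quadOverLin (v a b : ℝ) : Ffn v a b = quadOverLin v (logMean a b) := rfl

section quadOverLin

variable {v s : ℝ}

lemma ofReal_le_quadOverLin (hs : 0 ≤ s) (t : ℝ) :
    ENNReal.ofReal (2 * t * v - t ^ 2 * s) ≤ quadOverLin v s := by
  unfold quadOverLin
  split_ifs with hs₀ hv
  · rw [ENNReal.ofReal_le_ofReal_iff (by positivity), le_div_iff₀ hs₀]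
    nlinarith [sq_nonneg (v - t * s)]
  · simp [hv, le_antisymm (not_lt.mp hs₀) hs]
  · exact le_top

lemma quadOverLin_eq_iSup (hs : 0 ≤ s) :
    quadOverLin v s = ⨆ t : ℝ, ENNReal.ofReal (2 * t * v - t ^ 2 * s) := by
  refine le_antisymm ?_ (iSup_le (ofReal_le_quadOverLin hs))
  unfold quadOverLin
  split_ifs with hs₀ hv
  · refine le_iSup_of_le (v / s) (ENNReal.ofReal_le_ofReal (le_of_eq ?_))
    field_simp
    ring
  · exact bot_le
  · refine top_le_iff.mpr <| ENNReal.eq_top_of_forall_nnreal_le fun r ↦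
      le_iSup_of_le (r / (2 * v)) ?_
    rw [le_antisymm (not_lt.mp hs₀) hs, mul_zero, sub_zero,
      show 2 * (r / (2 * v)) * v = r by field_simp, ENNReal.ofReal_coe_nnreal]

lemma quadOverLin_anti {s' : ℝ} (hs : 0 ≤ s) (hss' : s ≤ s') :
    quadOverLin v s' ≤ quadOverLin v s := by
  rw [quadOverLin_eq_iSup hs, quadOverLin_eq_iSup (hs.trans hss')]
  gcongr

lemma quadOverLin_convex {v₁ v₂ s₁ s₂ θ : ℝ} (hs₁ : 0 ≤ s₁) (hs₂ : 0 ≤ s₂) (hθ₀ : 0 ≤ θ)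
    (hθ₁ : θ ≤ 1) :
    quadOverLin (θ * v₁ + (1 - θ) * v₂) (θ * s₁ + (1 - θ) * s₂)
      ≤ ENNReal.ofReal θ * quadOverLin v₁ s₁ + ENNReal.ofReal (1 - θ) * quadOverLin v₂ s₂ := by
  have hθ₁' : 0 ≤ 1 - θ := by linarith
  rw [quadOverLin_eq_iSup (by positivity)]
  refine iSup_le fun t ↦ ?_
  calc ENNReal.ofReal (2 * t * (θ * v₁ + (1 - θ) * v₂) - t ^ 2 * (θ * s₁ + (1 - θ) * s₂))
      = ENNReal.ofReal (θ * (2 * t * v₁ - t ^ 2 * s₁) + (1 - θ) * (2 * t * v₂ - t ^ 2 * s₂)) := by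
        ring_nf
    _ ≤ ENNReal.ofReal θ * ENNReal.ofReal (2 * t * v₁ - t ^ 2 * s₁)
          + ENNReal.ofReal (1 - θ) * ENNReal.ofReal (2 * t * v₂ - t ^ 2 * s₂) := by
        rw [← ENNReal.ofReal_mul hθ₀, ← ENNReal.ofReal_mul hθ₁']
        exact ENNReal.ofReal_add_le
    _ ≤ _ := by gcongr <;> exact ofReal_le_quadOverLin ‹_› t

lemma quadOverLin_mul {c : ℝ} (hc : 0 ≤ c) (hs : 0 ≤ s) :
    quadOverLin (c * v) (c * s) = ENNReal.ofReal c * quadOverLin v s := by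
  rw [quadOverLin_eq_iSup (mul_nonneg hc hs), quadOverLin_eq_iSup hs, ENNReal.mul_iSup]
  refine iSup_congr fun t ↦ ?_
  rw [← ENNReal.ofReal_mul hc]
  ring_nf

end quadOverLin

section geomMean

variable {α x y : ℝ}

lemma mul_rpow_mul_mul_rpow_one_sub {c : ℝ} (hc : 0 ≤ c) (hx : 0 ≤ x) (hy : 0 ≤ y) :
    (c * x) ^ α * (c * y) ^ (1 - α) = c * (x ^ α * y ^ (1 - α)) := by
  rw [Real.mul_rpow hc hx, Real.mul_rpow hc hy, mul_mul_mul_comm, ← Real.rpow_add' hc (by simp),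
    add_sub_cancel, Real.rpow_one]

lemma rpow_mul_rpow_one_sub_le (hα₀ : 0 ≤ α) (hα₁ : α ≤ 1) (hx : 0 ≤ x) (hy : 0 ≤ y) :
    x ^ α * y ^ (1 - α) ≤ x + y := by
  have := Real.geom_mean_le_arith_mean2_weighted hα₀ (sub_nonneg.mpr hα₁) hx hy (by ring)
  nlinarith

lemma rpow_mul_rpow_one_sub_add_le (hα₀ : 0 < α) (hα₁ : α < 1) {x₁ x₂ y₁ y₂ : ℝ} (hx₁ : 0 ≤ x₁)
    (hx₂ : 0 ≤ x₂) (hy₁ : 0 ≤ y₁) (hy₂ : 0 ≤ y₂) :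
    x₁ ^ α * y₁ ^ (1 - α) + x₂ ^ α * y₂ ^ (1 - α) ≤ (x₁ + x₂) ^ α * (y₁ + y₂) ^ (1 - α) := by
  have := Real.inner_le_Lp_mul_Lq_of_nonneg Finset.univ (f := ![x₁ ^ α, x₂ ^ α])
    (g := ![y₁ ^ (1 - α), y₂ ^ (1 - α)]) (Real.HolderConjugate.inv_one_sub_inv hα₀ hα₁)
    (by simp [Fin.forall_fin_two, Real.rpow_nonneg, *])
    (by simp [Fin.forall_fin_two, Real.rpow_nonneg, *])
  simpa [Fin.sum_univ_two, ← Real.rpow_mul, hx₁, hx₂, hy₁, hy₂, hα₀.ne', (sub_pos.mpr hα₁).ne']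
    using this

end geomMean

lemma intervalIntegrable_rpow_mul_rpow_one_sub {a b : ℝ} (ha : 0 ≤ a) (hb : 0 ≤ b) :
    IntervalIntegrable (fun α : ℝ ↦ a ^ α * b ^ (1 - α)) volume 0 1 := by
  refine (intervalIntegrable_const (c := a + b)).mono_fun (by fun_prop) ?_
  rw [Set.uIoc_of_le zero_le_one]
  filter_upwards [ae_restrict_mem measurableSet_Ioc] with α hα
  rw [Real.norm_of_nonneg (by positivity), Real.norm_of_nonneg (by positivity)]
  exact rpow_mul_rpow_one_sub_le hα.1.le hα.2 ha hb

lemma logMean_nonneg {a b : ℝ} (ha : 0 ≤ a) (hb : 0 ≤ b) : 0 ≤ logMean a b :=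
  intervalIntegral.integral_nonneg zero_le_one fun _ _ ↦ by positivity

lemma logMean_mul {c a b : ℝ} (hc : 0 ≤ c) (ha : 0 ≤ a) (hb : 0 ≤ b) :
    logMean (c * a) (c * b) = c * logMean a b := by
  simp_rw [logMean, mul_rpow_mul_mul_rpow_one_sub hc ha hb, intervalIntegral.integral_const_mul]

lemma logMean_add_le {a₁ b₁ a₂ b₂ : ℝ} (ha₁ : 0 ≤ a₁) (hb₁ : 0 ≤ b₁) (ha₂ : 0 ≤ a₂)
    (hb₂ : 0 ≤ b₂) :
    logMean a₁ b₁ + logMean a₂ b₂ ≤ logMean (a₁ + a₂) (b₁ + b₂) := by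
  have h₁ := intervalIntegrable_rpow_mul_rpow_one_sub ha₁ hb₁
  have h₂ := intervalIntegrable_rpow_mul_rpow_one_sub ha₂ hb₂
  rw [logMean, logMean, ← intervalIntegral.integral_add h₁ h₂]
  exact intervalIntegral.integral_mono_on_of_le_Ioo zero_le_one (h₁.add h₂)
    (intervalIntegrable_rpow_mul_rpow_one_sub (add_nonneg ha₁ ha₂) (add_nonneg hb₁ hb₂))
    fun α hα ↦ rpow_mul_rpow_one_sub_add_le hα.1 hα.2 ha₁ ha₂ hb₁ hb₂

theorem Ffn_convex_and_homogeneous :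
    (∀ v₁ a₁ b₁ v₂ a₂ b₂ θ : ℝ, 0 ≤ a₁ → 0 ≤ b₁ → 0 ≤ a₂ → 0 ≤ b₂ → 0 ≤ θ → θ ≤ 1 →
      Ffn (θ * v₁ + (1 - θ) * v₂) (θ * a₁ + (1 - θ) * a₂) (θ * b₁ + (1 - θ) * b₂)
        ≤ ENNReal.ofReal θ * Ffn v₁ a₁ b₁ + ENNReal.ofReal (1 - θ) * Ffn v₂ a₂ b₂)
    ∧ (∀ c v a b : ℝ, 0 ≤ c → 0 ≤ a → 0 ≤ b →
      Ffn (c * v) (c * a) (c * b) = ENNReal.ofReal c * Ffn v a b) := by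
  refine ⟨fun v₁ a₁ b₁ v₂ a₂ b₂ θ ha₁ hb₁ ha₂ hb₂ hθ₀ hθ₁ ↦ ?_, fun c v a b hc ha hb ↦ ?_⟩
  · have hθ₁' : 0 ≤ 1 - θ := sub_nonneg.mpr hθ₁
    have hΛ₁ := logMean_nonneg ha₁ hb₁
    have hΛ₂ := logMean_nonneg ha₂ hb₂
    have hconcave : θ * logMean a₁ b₁ + (1 - θ) * logMean a₂ b₂
        ≤ logMean (θ * a₁ + (1 - θ) * a₂) (θ * b₁ + (1 - θ) * b₂) := by
      rw [← logMean_mul hθ₀ ha₁ hb₁, ← logMean_mul hθ₁' ha₂ hb₂]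
      exact logMean_add_le (by positivity) (by positivity) (by positivity) (by positivity)
    rw [Ffn_eq_quadOverLin, Ffn_eq_quadOverLin, Ffn_eq_quadOverLin]
    exact (quadOverLin_anti (by positivity) hconcave).trans
      (quadOverLin_convex hΛ₁ hΛ₂ hθ₀ hθ₁)
  · rw [Ffn_eq_quadOverLin, Ffn_eq_quadOverLin, logMean_mul hc ha hb]
    exact quadOverLin_mul hc (logMean_nonneg ha hb)
end

section
/- The function λ(a,b) = (a-b)(log a - log b) for a,b > 0 (extended by λ(a,a)=0 and λ(a,0)=λ(0,b)=+∞ for a,b>0, λ(0,0)=0) is jointly convex and 1-homogeneous on ℝ₊ × ℝ₊. -/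
/-!
Writing `λ(a, b) = a log (a / b) + b log (b / a)` exhibits `λ` as a sum of two perspectives of
the convex function `x log x`; hence the log-sum inequality makes `λ` subadditive, and `λ` is
visibly `1`-homogeneous. A `1`-homogeneous subadditive function is convex:
`λ(θ p + (1 - θ) q) ≤ λ(θ p) + λ((1 - θ) q) = θ λ(p) + (1 - θ) λ(q)`.
Both survive the boundary conventions, as `λ` is finite only on the open quadrant and at `0`.
-/

/-- The function `λ(a,b) = (a-b)(log a - log b)` for `a,b > 0`, `0` at `(0,0)` and `+∞`
when exactly one of `a, b` is zero. -/
noncomputable def lamFn (a b : ℝ) : ENNReal :=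
  if 0 < a ∧ 0 < b then ENNReal.ofReal ((a - b) * (Real.log a - Real.log b))
  else if a = 0 ∧ b = 0 then 0
  else ⊤

open Real

/-- The log-sum inequality for two terms. -/
theorem add_mul_log_div_add_le {a b c d : ℝ} (ha : 0 ≤ a) (hb : 0 < b) (hc : 0 ≤ c)
    (hd : 0 < d) :
    (a + c) * log ((a + c) / (b + d)) ≤ a * log (a / b) + c * log (c / d) := by
  have hbd : 0 < b + d := by positivity
  have hconv := convexOn_mul_log.2 (Set.mem_Ici.2 (div_nonneg ha hb.le))
    (Set.mem_Ici.2 (div_nonneg hc hd.le)) (div_pos hb hbd).le (div_pos hd hbd).le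
    (by field_simp)
  have hmean : b / (b + d) * (a / b) + d / (b + d) * (c / d) = (a + c) / (b + d) := by
    field_simp
  simp only [smul_eq_mul, hmean] at hconv
  calc (a + c) * log ((a + c) / (b + d))
      = (b + d) * ((a + c) / (b + d) * log ((a + c) / (b + d))) := by field_simp
    _ ≤ (b + d) * (b / (b + d) * (a / b * log (a / b))
          + d / (b + d) * (c / d * log (c / d))) := by gcongr
    _ = a * log (a / b) + c * log (c / d) := by field_simp

theorem sub_mul_log_sub_log_eq {a b : ℝ} (ha : a ≠ 0) (hb : b ≠ 0) :
    (a - b) * (log a - log b) = a * log (a / b) + b * log (b / a) := by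
  rw [log_div ha hb, log_div hb ha]; ring

theorem sub_mul_log_sub_log_nonneg {a b : ℝ} (ha : 0 < a) (hb : 0 < b) :
    0 ≤ (a - b) * (log a - log b) := by
  rcases le_total a b with hab | hab
  · exact mul_nonneg_of_nonpos_of_nonpos (by linarith) (by linarith [log_le_log ha hab])
  · exact mul_nonneg (by linarith) (by linarith [log_le_log hb hab])

theorem sub_mul_log_sub_log_add_le {a b c d : ℝ} (ha : 0 < a) (hb : 0 < b) (hc : 0 < c)
    (hd : 0 < d) :
    (a + c - (b + d)) * (log (a + c) - log (b + d))
      ≤ (a - b) * (log a - log b) + (c - d) * (log c - log d) := by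
  rw [sub_mul_log_sub_log_eq ha.ne' hb.ne', sub_mul_log_sub_log_eq hc.ne' hd.ne',
    sub_mul_log_sub_log_eq (by positivity) (by positivity)]
  linarith [add_mul_log_div_add_le ha.le hb hc.le hd, add_mul_log_div_add_le hb.le ha hd.le hc]

theorem sub_mul_log_sub_log_mul {a b c : ℝ} (ha : a ≠ 0) (hb : b ≠ 0) (hc : c ≠ 0) :
    (c * a - c * b) * (log (c * a) - log (c * b)) = c * ((a - b) * (log a - log b)) := by
  rw [log_mul hc ha, log_mul hc hb]; ring

theorem lamFn_of_pos {a b : ℝ} (ha : 0 < a) (hb : 0 < b) :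
    lamFn a b = ENNReal.ofReal ((a - b) * (log a - log b)) := by
  simp [lamFn, ha, hb]

theorem lamFn_zero_zero : lamFn 0 0 = 0 := by simp [lamFn]

theorem pos_or_eq_zero_of_lamFn_ne_top {a b : ℝ} (h : lamFn a b ≠ ⊤) :
    (0 < a ∧ 0 < b) ∨ (a = 0 ∧ b = 0) := by
  unfold lamFn at h
  split_ifs at h with hpos hzero
  · exact .inl hpos
  · exact .inr hzero
  · exact absurd rfl h

theorem lamFn_add_le (a₁ b₁ a₂ b₂ : ℝ) :
    lamFn (a₁ + a₂) (b₁ + b₂) ≤ lamFn a₁ b₁ + lamFn a₂ b₂ := by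
  by_cases h₁ : lamFn a₁ b₁ = ⊤
  · simp [h₁]
  by_cases h₂ : lamFn a₂ b₂ = ⊤
  · simp [h₂]
  rcases pos_or_eq_zero_of_lamFn_ne_top h₁ with ⟨ha₁, hb₁⟩ | ⟨rfl, rfl⟩
  · rcases pos_or_eq_zero_of_lamFn_ne_top h₂ with ⟨ha₂, hb₂⟩ | ⟨rfl, rfl⟩
    · rw [lamFn_of_pos ha₁ hb₁, lamFn_of_pos ha₂ hb₂,
        lamFn_of_pos (by positivity) (by positivity),
        ← ENNReal.ofReal_add (sub_mul_log_sub_log_nonneg ha₁ hb₁)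
          (sub_mul_log_sub_log_nonneg ha₂ hb₂)]
      exact ENNReal.ofReal_le_ofReal (sub_mul_log_sub_log_add_le ha₁ hb₁ ha₂ hb₂)
    · simp [lamFn_zero_zero]
  · simp [lamFn_zero_zero]

theorem lamFn_mul {c : ℝ} (hc : 0 ≤ c) (a b : ℝ) :
    lamFn (c * a) (c * b) = ENNReal.ofReal c * lamFn a b := by
  rcases hc.eq_or_lt with rfl | hc
  · simp [lamFn_zero_zero]
  have hc' : ENNReal.ofReal c ≠ 0 := by simpa using hc
  simp only [lamFn, mul_pos_iff_of_pos_left hc, mul_eq_zero, hc.ne', false_or]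
  split_ifs with hpos
  · rw [sub_mul_log_sub_log_mul hpos.1.ne' hpos.2.ne' hc.ne', ENNReal.ofReal_mul hc.le]
  · simp
  · exact (ENNReal.mul_top hc').symm

theorem lamFn_convex_and_homogeneous :
    (∀ a₁ b₁ a₂ b₂ θ : ℝ, 0 ≤ a₁ → 0 ≤ b₁ → 0 ≤ a₂ → 0 ≤ b₂ → 0 ≤ θ → θ ≤ 1 →
      lamFn (θ * a₁ + (1 - θ) * a₂) (θ * b₁ + (1 - θ) * b₂)
        ≤ ENNReal.ofReal θ * lamFn a₁ b₁ + ENNReal.ofReal (1 - θ) * lamFn a₂ b₂)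
    ∧ (∀ c a b : ℝ, 0 ≤ c → 0 ≤ a → 0 ≤ b →
      lamFn (c * a) (c * b) = ENNReal.ofReal c * lamFn a b) := by
  refine ⟨fun a₁ b₁ a₂ b₂ θ _ _ _ _ hθ₀ hθ₁ => ?_,
    fun c a b hc _ _ => lamFn_mul hc a b⟩
  calc lamFn (θ * a₁ + (1 - θ) * a₂) (θ * b₁ + (1 - θ) * b₂)
      ≤ lamFn (θ * a₁) (θ * b₁) + lamFn ((1 - θ) * a₂) ((1 - θ) * b₂) := lamFn_add_le ..
    _ = ENNReal.ofReal θ * lamFn a₁ b₁ + ENNReal.ofReal (1 - θ) * lamFn a₂ b₂ := by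
      rw [lamFn_mul hθ₀, lamFn_mul (sub_nonneg.2 hθ₁)]
end

section
/- Let X be a finite set and ν ∈ P_N(X), i.e., Nν(x) is a nonnegative integer for each x and ∑ₓ ν(x) = 1. Then -log(N+1)/N ≤ -(1/N)·log( N! / ∏ₓ (Nν(x))! ) - ∑ₓ ν(x) log ν(x) ≤ |X|·log(N)/N + 1/N (with the convention 0·log 0 = 0). -/
/-!
Write `M` for the multinomial coefficient and `H = -∑ ν log ν`. The lower bound holds in the
stronger form `M ≤ exp (N H)`: the term of index `k` in the multinomial expansion of
`(∑ ν(x)) ^ N = 1` is `M ∏ ν(x) ^ k(x) = M exp (-N H)`.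

For the upper bound, the Stirling bounds `n log n - n ≤ log n!` and
`log n! ≤ n log n - n + log n + 1` (for `n ≥ 1`), applied to `N!` and to the nonzero `k(x)!`,
leave `∑_{x ∈ S} log k(x) + |S| ≤ |S| log N + 1` to show, `S` being the support of `k`. This
follows from Jensen's inequality `∑_{x ∈ S} log k(x) ≤ |S| log (N / |S|)` and `s log s ≥ s - 1`.
-/

open Nat Finset

theorem Stirling.log_factorial_le_stirling {n : ℕ} (hn : n ≠ 0) :
    Real.log n ! ≤ n * Real.log n - n + Real.log n / 2 + 1 := by
  obtain ⟨m, rfl⟩ := Nat.exists_eq_succ_of_ne_zero hn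
  have hseq : stirlingSeq (m + 1) ≤ Real.exp 1 / √2 :=
    stirlingSeq_one ▸ stirlingSeq'_antitone (Nat.zero_le m)
  have hlog := Real.log_le_log (stirlingSeq'_pos m) hseq
  rw [log_stirlingSeq_formula, Real.log_div (Real.exp_pos 1).ne' (by positivity),
    Real.log_exp, Real.log_sqrt zero_le_two, Real.log_mul two_ne_zero (by positivity),
    Real.log_div (by positivity) (Real.exp_pos 1).ne', Real.log_exp] at hlog
  push_cast at hlog ⊢
  linarith

theorem Real.self_mul_log_sub_self_le_log_factorial (n : ℕ) :
    n * Real.log n - n ≤ Real.log n ! := by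
  rcases eq_or_ne n 0 with rfl | hn
  · simp
  have h2pi : 0 ≤ Real.log (2 * Real.pi) := Real.log_nonneg (by linarith [Real.pi_gt_three])
  linarith [Stirling.le_log_factorial_stirling hn, Real.log_natCast_nonneg n]

theorem Real.sum_log_le_card_mul_log_sum_div {ι : Type*} (s : Finset ι) (f : ι → ℝ)
    (hf : ∀ i ∈ s, 0 < f i) :
    ∑ i ∈ s, Real.log (f i) ≤ #s * Real.log ((∑ i ∈ s, f i) / #s) := by
  rcases s.eq_empty_or_nonempty with rfl | hs
  · simp
  have hcard : (0 : ℝ) < #s := by exact_mod_cast hs.card_pos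
  have := strictConcaveOn_log_Ioi.concaveOn.le_map_sum (t := s) (w := fun _ => (#s : ℝ)⁻¹)
    (p := f) (fun _ _ => by positivity) (by simp [hcard.ne']) hf
  simp only [smul_eq_mul, ← Finset.mul_sum] at this
  rwa [inv_mul_eq_div, inv_mul_eq_div, div_le_iff₀' hcard] at this

theorem Real.sum_log_factorial_le {ι : Type*} (s : Finset ι) (k : ι → ℕ) (hk : ∀ i ∈ s, k i ≠ 0) :
    ∑ i ∈ s, Real.log (k i)! ≤
      ∑ i ∈ s, ((k i : ℝ) * Real.log (k i) - k i) + #s * Real.log (∑ i ∈ s, (k i : ℝ)) + 1 := by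
  have hstirling (i) (hi : i ∈ s) :
      Real.log (k i)! ≤ (k i * Real.log (k i) - k i) + Real.log (k i) + 1 := by
    linarith [Stirling.log_factorial_le_stirling (hk i hi), Real.log_natCast_nonneg (k i)]
  have hjensen := Real.sum_log_le_card_mul_log_sum_div s (fun i => (k i : ℝ))
    fun i hi => Nat.cast_pos.mpr (Nat.pos_of_ne_zero (hk i hi))
  have hcard : #s * Real.log ((∑ i ∈ s, (k i : ℝ)) / #s) + #s ≤
      #s * Real.log (∑ i ∈ s, (k i : ℝ)) + 1 := by
    rcases s.eq_empty_or_nonempty with rfl | hs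
    · simp
    have hsum : (0 : ℝ) < ∑ i ∈ s, (k i : ℝ) := Finset.sum_pos
      (fun i hi => Nat.cast_pos.mpr (Nat.pos_of_ne_zero (hk i hi))) hs
    rw [Real.log_div hsum.ne' (Nat.cast_ne_zero.mpr hs.card_pos.ne')]
    linarith [Real.self_sub_one_le_mul_log (Nat.cast_nonneg (α := ℝ) #s)]
  calc ∑ i ∈ s, Real.log (k i)!
      ≤ ∑ i ∈ s, ((k i * Real.log (k i) - k i) + Real.log (k i) + 1) := sum_le_sum hstirling
    _ = ∑ i ∈ s, ((k i : ℝ) * Real.log (k i) - k i) + ∑ i ∈ s, Real.log (k i) + #s := by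
      simp only [sum_add_distrib, sum_const, nsmul_one]
    _ ≤ _ := by linarith

theorem Nat.multinomial_mul_prod_pow_le_one {ι R : Type*} [Fintype ι] [DecidableEq ι]
    [CommSemiring R] [PartialOrder R] [IsOrderedRing R]
    (k : ι → ℕ) (p : ι → R) (hp : ∀ i, 0 ≤ p i) (hp1 : ∑ i, p i = 1) :
    multinomial univ k * ∏ i, p i ^ k i ≤ 1 := by
  calc multinomial univ k * ∏ i, p i ^ k i
      ≤ ∑ k' ∈ piAntidiag univ (∑ i, k i), multinomial univ k' * ∏ i, p i ^ k' i :=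
        single_le_sum (f := fun k' => (multinomial univ k' : R) * ∏ i, p i ^ k' i)
          (fun _ _ => mul_nonneg (Nat.cast_nonneg _) (prod_nonneg fun i _ => pow_nonneg (hp i) _))
          (by simp)
    _ = 1 := by rw [← sum_pow_eq_sum_piAntidiag, hp1, one_pow]

theorem Nat.cast_multinomial {ι K : Type*} [Semifield K] [CharZero K] (s : Finset ι)
    (k : ι → ℕ) : (multinomial s k : K) = (∑ i ∈ s, k i)! / ∏ i ∈ s, ((k i)! : K) := by
  rw [multinomial, Nat.cast_div (prod_factorial_dvd_factorial_sum s k)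
    (Nat.cast_ne_zero.mpr (prod_factorial_pos s k).ne'),
    Nat.cast_prod]

variable {ι : Type*} [Fintype ι]

theorem Real.mul_log_div_eq {n N : ℕ} (hn : n ≤ N) :
    (n : ℝ) * Real.log (n / N) = n * Real.log n - n * Real.log N := by
  rcases eq_or_ne n 0 with rfl | hn0
  · simp
  rw [Real.log_div (by positivity) (Nat.cast_ne_zero.mpr (by omega))]
  ring

theorem Real.log_multinomial_le_neg_sum_mul_log (k : ι → ℕ) {N : ℕ} (hN : ∑ i, k i = N) :
    Real.log (multinomial univ k) ≤ -∑ i, k i * Real.log (k i / N) := by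
  classical
  rcases eq_or_ne N 0 with rfl | hN0
  · simp_all [Nat.multinomial]
  have hp1 : ∑ i, (k i : ℝ) / N = 1 := by
    rw [← sum_div, ← Nat.cast_sum, hN, div_self (by positivity)]
  have hpow (i) : ((k i : ℝ) / N) ^ k i ≠ 0 := by
    rcases eq_or_ne (k i) 0 with h | h
    · simp [h]
    · exact pow_ne_zero _ (div_ne_zero (Nat.cast_ne_zero.mpr h) (Nat.cast_ne_zero.mpr hN0))
  have hle := Real.log_nonpos
    (mul_nonneg (Nat.cast_nonneg _) (prod_nonneg fun i _ => by positivity))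
    (multinomial_mul_prod_pow_le_one k (fun i => (k i : ℝ) / N) (fun i => by positivity) hp1)
  rw [Real.log_mul (Nat.cast_ne_zero.mpr (multinomial_pos _ _).ne')
    (prod_ne_zero_iff.mpr fun i _ => hpow i), Real.log_prod fun i _ => hpow i] at hle
  simp only [Real.log_pow] at hle
  linarith

theorem Real.neg_sum_mul_log_le_log_multinomial_add (k : ι → ℕ) {N : ℕ} (hN : ∑ i, k i = N) :
    -∑ i, k i * Real.log (k i / N) ≤
      Real.log (multinomial univ k) + Fintype.card ι * Real.log N + 1 := by
  have hlogM : Real.log (multinomial univ k) = Real.log N ! - ∑ i, Real.log (k i)! := by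
    rw [Nat.cast_multinomial, hN, Real.log_div (by positivity) (by positivity),
      Real.log_prod fun i _ => by positivity]
  have hsum_mul_log : ∑ i, (k i : ℝ) * Real.log (k i / N) =
      ∑ i, (k i : ℝ) * Real.log (k i) - N * Real.log N := by
    rw [sum_congr rfl fun i _ => Real.mul_log_div_eq (hN ▸ single_le_sum (by simp) (mem_univ i)),
      sum_sub_distrib, ← sum_mul, ← Nat.cast_sum, hN]
  set S := univ.filter (k · ≠ 0)
  have hS (f : ℕ → ℝ) (hf : f 0 = 0) : ∑ i ∈ S, f (k i) = ∑ i, f (k i) :=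
    sum_filter_of_ne fun i _ h hk => h (by rw [hk, hf])
  have hfact := Real.sum_log_factorial_le S k fun i hi => (mem_filter.mp hi).2
  simp only [sum_sub_distrib] at hfact
  rw [hS (fun n => Real.log n !) (by simp), hS (fun n => n * Real.log n) (by simp),
    hS (fun n => n) (by simp), ← Nat.cast_sum, hN] at hfact
  have hcard : (#S : ℝ) * Real.log N ≤ Fintype.card ι * Real.log N :=
    mul_le_mul_of_nonneg_right (by exact_mod_cast card_le_univ S) (Real.log_natCast_nonneg N)
  linarith [Real.self_mul_log_sub_self_le_log_factorial N]

theorem stirling_multinomial_estimate_general (X : Type) [Fintype X]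
    (N : ℕ)
    (k : X → ℕ) (hk : ∑ x, k x = N) :
    -(Real.log (N + 1)) / N
      ≤ -(1 / N) * Real.log ((N ! : ℝ) / ∏ x, ((k x)! : ℝ))
          - ∑ x, ((k x : ℝ) / N) * Real.log ((k x : ℝ) / N)
    ∧ -(1 / N) * Real.log ((N ! : ℝ) / ∏ x, ((k x)! : ℝ))
          - ∑ x, ((k x : ℝ) / N) * Real.log ((k x : ℝ) / N)
      ≤ (Fintype.card X : ℝ) * Real.log N / N + 1 / N := by
  have hE : -(1 / N) * Real.log ((N ! : ℝ) / ∏ x, ((k x)! : ℝ))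
        - ∑ x, ((k x : ℝ) / N) * Real.log ((k x : ℝ) / N)
      = -(Real.log (multinomial univ k) + ∑ x, (k x : ℝ) * Real.log (k x / N)) / N := by
    simp only [Nat.cast_multinomial, hk, div_mul_eq_mul_div, ← sum_div]
    ring
  have hlower := Real.log_multinomial_le_neg_sum_mul_log k hk
  have hupper := Real.neg_sum_mul_log_le_log_multinomial_add k hk
  rw [hE]
  constructor
  · calc -Real.log (N + 1) / N ≤ 0 :=
          div_nonpos_of_nonpos_of_nonneg (neg_nonpos.mpr (Real.log_nonneg (by simp)))
            N.cast_nonneg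
      _ ≤ _ := div_nonneg (by linarith) N.cast_nonneg
  · rw [← add_div]
    exact div_le_div_of_nonneg_right (by linarith) N.cast_nonneg

theorem stirling_multinomial_estimate (X : Type) [Fintype X]
    (hX : 2 ≤ Fintype.card X) (N : ℕ) (hN : 1 ≤ N)
    (k : X → ℕ) (hk : ∑ x, k x = N) :
    -(Real.log (N + 1)) / N
      ≤ -(1 / N) * Real.log ((N ! : ℝ) / ∏ x, ((k x)! : ℝ))
          - ∑ x, ((k x : ℝ) / N) * Real.log ((k x : ℝ) / N)
    ∧ -(1 / N) * Real.log ((N ! : ℝ) / ∏ x, ((k x)! : ℝ))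
          - ∑ x, ((k x : ℝ) / N) * Real.log ((k x : ℝ) / N)
      ≤ (Fintype.card X : ℝ) * Real.log N / N + 1 / N :=
  stirling_multinomial_estimate_general X N k hk
end
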